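/- arXiv:hep-lat/9608074 — 2 statements merged into one kernel-verified Lean document; each statement's English description precedes it below -/
import Mathlib

section
/- Let M = I − κB with B = [[0, B₁],[B₂, 0]] block anti-diagonal, and let M_e = I − κ²B₂B₁ be the odd-even reduced matrix. Then μ is an eigenvalue of M_e if and only if μ = λ(2 − λ) for some eigenvalue λ of M. -/
open Matrix

lemma memSpecIffDet {n : Type*} [Fintype n] [DecidableEq n]
    (X : Matrix n n ℂ) (μ : ℂ) :
    μ ∈ spectrum ℂ X ↔ (μ • (1 : Matrix n n ℂ) - X).det = 0 := by
  rw [spectrum.mem_iff, Algebra.algebraMap_eq_smul_one]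
  rw [Matrix.isUnit_iff_isUnit_det, isUnit_iff_ne_zero, not_not]

lemma detCommAux {l : ℕ} (C D : Matrix (Fin l) (Fin l) ℂ) (s : ℂ) :
    (s • (1 : Matrix (Fin l) (Fin l) ℂ) - C * D).det
      = (s • (1 : Matrix (Fin l) (Fin l) ℂ) - D * C).det := by
  rcases eq_or_ne s 0 with rfl | hs
  · simp [zero_smul, zero_sub, Matrix.det_neg, Matrix.det_mul, mul_comm]
  · have h1 : s • (1 : Matrix (Fin l) (Fin l) ℂ) - C * D
        = s • (1 + (-(s⁻¹ • C)) * D) := by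
      rw [smul_add, Matrix.neg_mul, Matrix.smul_mul, smul_neg, smul_smul,
        mul_inv_cancel₀ hs, one_smul, ← sub_eq_add_neg]
    have h2 : s • (1 : Matrix (Fin l) (Fin l) ℂ) - D * C
        = s • (1 + D * (-(s⁻¹ • C))) := by
      rw [smul_add, Matrix.mul_neg, Matrix.mul_smul, smul_neg, smul_smul,
        mul_inv_cancel₀ hs, one_smul, ← sub_eq_add_neg]
    rw [h1, h2, Matrix.det_smul, Matrix.det_smul, Matrix.det_one_add_mul_comm]

lemma keyDet {l : ℕ} (C D : Matrix (Fin l) (Fin l) ℂ) (t : ℂ) :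
    ((t • (1 : Matrix (Fin l ⊕ Fin l) (Fin l ⊕ Fin l) ℂ)
        - Matrix.fromBlocks 0 C D 0).det = 0)
      ↔ ((t ^ 2) • (1 : Matrix (Fin l) (Fin l) ℂ) - D * C).det = 0 := by
  set X : Matrix (Fin l ⊕ Fin l) (Fin l ⊕ Fin l) ℂ :=
    Matrix.fromBlocks (t • 1) (-C) (-D) (t • 1) with hX
  set Y : Matrix (Fin l ⊕ Fin l) (Fin l ⊕ Fin l) ℂ :=
    Matrix.fromBlocks (t • 1) C D (t • 1) with hY
  have hXform : t • (1 : Matrix (Fin l ⊕ Fin l) (Fin l ⊕ Fin l) ℂ)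
      - Matrix.fromBlocks 0 C D 0 = X := by
    rw [hX, ← Matrix.fromBlocks_one, Matrix.fromBlocks_smul, sub_eq_add_neg,
      Matrix.fromBlocks_neg, Matrix.fromBlocks_add]
    simp
  have hdetXY : X.det * Y.det
      = ((t ^ 2) • (1 : Matrix (Fin l) (Fin l) ℂ) - C * D).det
        * ((t ^ 2) • (1 : Matrix (Fin l) (Fin l) ℂ) - D * C).det := by
    rw [← Matrix.det_mul, hX, hY, Matrix.fromBlocks_multiply]
    have e1 : t • (1 : Matrix (Fin l) (Fin l) ℂ) * (t • 1) + (-C) * D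
        = (t ^ 2) • (1 : Matrix (Fin l) (Fin l) ℂ) - C * D := by
      rw [Matrix.smul_mul, Matrix.mul_smul, smul_smul, ← sq, Matrix.one_mul,
        Matrix.neg_mul, ← sub_eq_add_neg]
    have e2 : t • (1 : Matrix (Fin l) (Fin l) ℂ) * C + (-C) * (t • 1)
        = (0 : Matrix (Fin l) (Fin l) ℂ) := by
      rw [Matrix.smul_mul, Matrix.mul_smul, Matrix.one_mul, Matrix.neg_mul,
        Matrix.mul_one, smul_neg, add_neg_cancel]
    have e3 : (-D) * (t • 1) + t • (1 : Matrix (Fin l) (Fin l) ℂ) * D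
        = (0 : Matrix (Fin l) (Fin l) ℂ) := by
      rw [Matrix.smul_mul, Matrix.mul_smul, Matrix.one_mul, Matrix.neg_mul,
        Matrix.mul_one, smul_neg, neg_add_cancel]
    have e4 : (-D) * C + t • (1 : Matrix (Fin l) (Fin l) ℂ) * (t • 1)
        = (t ^ 2) • (1 : Matrix (Fin l) (Fin l) ℂ) - D * C := by
      rw [Matrix.smul_mul, Matrix.mul_smul, smul_smul, ← sq, Matrix.one_mul,
        Matrix.neg_mul, add_comm, ← sub_eq_add_neg]
    rw [e1, e2, e3, e4, Matrix.det_fromBlocks_zero₁₂]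
  have hXeqY : Y.det = X.det := by
    set Dg : Matrix (Fin l ⊕ Fin l) (Fin l ⊕ Fin l) ℂ :=
      Matrix.fromBlocks 1 0 0 (-1) with hDg
    have hconj : Dg * X * Dg = Y := by
      rw [hDg, hX, hY, Matrix.fromBlocks_multiply, Matrix.fromBlocks_multiply]
      congr 1 <;> simp
    have hDgdet : Dg.det * Dg.det = 1 := by
      rw [← Matrix.det_mul, hDg, Matrix.fromBlocks_multiply]
      simp
    calc Y.det = (Dg * X * Dg).det := by rw [hconj]
      _ = Dg.det * Dg.det * X.det := by rw [Matrix.det_mul, Matrix.det_mul]; ring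
      _ = X.det := by rw [hDgdet, one_mul]
  have hsq : X.det ^ 2
      = ((t ^ 2) • (1 : Matrix (Fin l) (Fin l) ℂ) - D * C).det ^ 2 := by
    calc X.det ^ 2 = X.det * Y.det := by rw [hXeqY, sq]
      _ = _ := hdetXY
      _ = _ := by rw [detCommAux]; ring
  rw [hXform]
  constructor
  · intro h
    have : ((t ^ 2) • (1 : Matrix (Fin l) (Fin l) ℂ) - D * C).det ^ 2 = 0 := by
      rw [← hsq, h]; ring
    exact pow_eq_zero_iff two_ne_zero |>.mp this
  · intro h
    have : X.det ^ 2 = 0 := by rw [hsq, h]; ring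
    exact pow_eq_zero_iff two_ne_zero |>.mp this

theorem stmt13 {l : ℕ} (κ : ℂ) (B₁ B₂ : Matrix (Fin l) (Fin l) ℂ)
    (B : Matrix (Fin l ⊕ Fin l) (Fin l ⊕ Fin l) ℂ)
    (hB : B = Matrix.fromBlocks 0 B₁ B₂ 0)
    (M : Matrix (Fin l ⊕ Fin l) (Fin l ⊕ Fin l) ℂ) (hM : M = 1 - κ • B)
    (Me : Matrix (Fin l) (Fin l) ℂ) (hMe : Me = 1 - κ ^ 2 • (B₂ * B₁)) :
    ∀ μ : ℂ, μ ∈ spectrum ℂ Me ↔ ∃ lam ∈ spectrum ℂ M, μ = lam * (2 - lam) := by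
  intro μ
  -- spec characterizations
  have hMe' : ∀ ν : ℂ, ν ∈ spectrum ℂ Me ↔
      ((1 - ν) • (1 : Matrix (Fin l) (Fin l) ℂ) - κ ^ 2 • (B₂ * B₁)).det = 0 := by
    intro ν
    rw [memSpecIffDet, hMe]
    have : ν • (1 : Matrix (Fin l) (Fin l) ℂ) - (1 - κ ^ 2 • (B₂ * B₁))
        = -((1 - ν) • (1 : Matrix (Fin l) (Fin l) ℂ) - κ ^ 2 • (B₂ * B₁)) := by
      rw [sub_smul, one_smul]; abel
    rw [this, Matrix.det_neg]
    constructor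
    · intro h
      rcases mul_eq_zero.mp h with h' | h'
      · exact absurd h' (pow_ne_zero _ (by norm_num))
      · exact h'
    · intro h; rw [h, mul_zero]
  have hM' : ∀ lam : ℂ, lam ∈ spectrum ℂ M ↔
      ((1 - lam) • (1 : Matrix (Fin l ⊕ Fin l) (Fin l ⊕ Fin l) ℂ)
        - Matrix.fromBlocks 0 (κ • B₁) (κ • B₂) 0).det = 0 := by
    intro lam
    rw [memSpecIffDet, hM, hB]
    have hsmul : κ • Matrix.fromBlocks (0 : Matrix (Fin l) (Fin l) ℂ) B₁ B₂ 0
        = Matrix.fromBlocks 0 (κ • B₁) (κ • B₂) 0 := by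
      rw [Matrix.fromBlocks_smul, smul_zero]
    have : lam • (1 : Matrix (Fin l ⊕ Fin l) (Fin l ⊕ Fin l) ℂ)
          - (1 - κ • Matrix.fromBlocks (0 : Matrix (Fin l) (Fin l) ℂ) B₁ B₂ 0)
        = -((1 - lam) • (1 : Matrix (Fin l ⊕ Fin l) (Fin l ⊕ Fin l) ℂ)
          - Matrix.fromBlocks 0 (κ • B₁) (κ • B₂) 0) := by
      rw [← hsmul, sub_smul, one_smul]; abel
    rw [this, Matrix.det_neg]
    constructor
    · intro h
      rcases mul_eq_zero.mp h with h' | h'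
      · exact absurd h' (pow_ne_zero _ (by norm_num))
      · exact h'
    · intro h; rw [h, mul_zero]
  have hDC : (κ • B₂) * (κ • B₁) = κ ^ 2 • (B₂ * B₁) := by
    rw [Matrix.smul_mul, Matrix.mul_smul, smul_smul, sq]
  constructor
  · intro hμ
    obtain ⟨t, ht⟩ := IsAlgClosed.exists_pow_nat_eq (k := ℂ) (1 - μ) zero_lt_two
    have hdet : ((t ^ 2) • (1 : Matrix (Fin l) (Fin l) ℂ)
        - (κ • B₂) * (κ • B₁)).det = 0 := by
      rw [ht, hDC]
      exact (hMe' μ).mp hμ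
    have hlam : (1 - t) ∈ spectrum ℂ M := by
      rw [hM']
      have := (keyDet (κ • B₁) (κ • B₂) t).mpr hdet
      simpa using this
    refine ⟨1 - t, hlam, ?_⟩
    linear_combination ht
  · rintro ⟨lam, hlam, rfl⟩
    set t := 1 - lam with hts
    have hdet := (hM' lam).mp hlam
    have hdet2 : ((t ^ 2) • (1 : Matrix (Fin l) (Fin l) ℂ)
        - (κ • B₂) * (κ • B₁)).det = 0 :=
      (keyDet (κ • B₁) (κ • B₂) t).mp hdet
    rw [hMe']
    have h1 : 1 - lam * (2 - lam) = t ^ 2 := by rw [hts]; ring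
    rw [h1, ← hDC]
    exact hdet2
end

section
/- MR convergence rate for positive definite part: if M ∈ ℂⁿˣⁿ satisfies Re(x†Mx) ≥ α‖x‖² for all x and ‖Mx‖ ≤ β‖x‖, with α > 0, then for any nonzero r, min_t ‖r − tMr‖² ≤ (1 − α²/β²)‖r‖²; hence the MR iteration residuals satisfy ‖rᵐ‖ ≤ (1 − α²/β²)^{m/2}‖r⁰‖. -/
/-! Subtracting from `x` its orthogonal projection onto `y = f x` leaves
`‖x‖² - |⟪y, x⟫|² / ‖y‖²`. Coercivity gives `|⟪y, x⟫| ≥ α ‖x‖²` and boundedness `‖y‖ ≤ β ‖x‖`,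
so one minimal-residual step contracts `‖x‖²` by at least the factor `1 - α² / β²`;
iterating and taking square roots gives the rate `(1 - α² / β²) ^ (m / 2)`. -/
open RCLike

section
variable {𝕜 E : Type*} [RCLike 𝕜] [NormedAddCommGroup E] [InnerProductSpace 𝕜 E]

theorem norm_sub_inner_div_smul_sq (x y : E) :
    ‖x - (inner 𝕜 y x / (‖y‖ : 𝕜) ^ 2) • y‖ ^ 2 = ‖x‖ ^ 2 - ‖inner 𝕜 y x‖ ^ 2 / ‖y‖ ^ 2 := by
  have h_inner :
      re (inner 𝕜 x ((inner 𝕜 y x / (‖y‖ : 𝕜) ^ 2) • y)) = ‖inner 𝕜 y x‖ ^ 2 / ‖y‖ ^ 2 := by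
    rw [inner_smul_right, div_mul_eq_mul_div, ← inner_conj_symm x y, RCLike.mul_conj,
      ← ofReal_pow, ← ofReal_pow, ← ofReal_div, ofReal_re]
  have h_smul : ‖(inner 𝕜 y x / (‖y‖ : 𝕜) ^ 2) • y‖ ^ 2 = ‖inner 𝕜 y x‖ ^ 2 / ‖y‖ ^ 2 := by
    rw [norm_smul, norm_div, norm_pow, norm_ofReal, abs_norm]
    field_simp
  rw [norm_sub_sq (𝕜 := 𝕜), h_inner, h_smul]
  ring

theorem exists_norm_sub_smul_sq_le {α β : ℝ} (hα : 0 ≤ α) {x y : E}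
    (hlow : α * ‖x‖ ^ 2 ≤ re (inner 𝕜 x y)) (hup : ‖y‖ ≤ β * ‖x‖) :
    ∃ τ : 𝕜, ‖x - τ • y‖ ^ 2 ≤ (1 - α ^ 2 / β ^ 2) * ‖x‖ ^ 2 := by
  refine ⟨inner 𝕜 y x / (‖y‖ : 𝕜) ^ 2, ?_⟩
  rw [norm_sub_inner_div_smul_sq]
  suffices α ^ 2 / β ^ 2 * ‖x‖ ^ 2 ≤ ‖inner 𝕜 y x‖ ^ 2 / ‖y‖ ^ 2 by linarith
  have h_inner : α * ‖x‖ ^ 2 ≤ ‖inner 𝕜 y x‖ :=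
    hlow.trans ((re_le_norm _).trans (norm_inner_symm x y).le)
  rcases eq_or_ne y 0 with rfl | hy
  · have : α * ‖x‖ ^ 2 = 0 := le_antisymm (by simpa using h_inner) (by positivity)
    calc α ^ 2 / β ^ 2 * ‖x‖ ^ 2 = α * (α * ‖x‖ ^ 2) / β ^ 2 := by ring
      _ = 0 := by rw [this, mul_zero, zero_div]
      _ ≤ _ := by positivity
  have hy' : 0 < ‖y‖ := norm_pos_iff.2 hy
  have hβ : 0 < β := pos_of_mul_pos_left (hy'.trans_le hup) (norm_nonneg x)
  rw [div_mul_eq_mul_div, div_le_div_iff₀ (by positivity) (by positivity)]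
  calc α ^ 2 * ‖x‖ ^ 2 * ‖y‖ ^ 2 ≤ α ^ 2 * ‖x‖ ^ 2 * (β * ‖x‖) ^ 2 := by gcongr
    _ = β ^ 2 * (α * ‖x‖ ^ 2) ^ 2 := by ring
    _ ≤ β ^ 2 * ‖inner 𝕜 y x‖ ^ 2 := by gcongr
    _ = _ := by ring

theorem le_of_re_inner_le {α β : ℝ} {x y : E} (hx : x ≠ 0)
    (hlow : α * ‖x‖ ^ 2 ≤ re (inner 𝕜 x y)) (hup : ‖y‖ ≤ β * ‖x‖) : α ≤ β := by
  have hx' : 0 < ‖x‖ := norm_pos_iff.2 hx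
  have : α * ‖x‖ ^ 2 ≤ β * ‖x‖ ^ 2 :=
    calc α * ‖x‖ ^ 2 ≤ ‖x‖ * ‖y‖ := hlow.trans (re_inner_le_norm x y)
      _ ≤ ‖x‖ * (β * ‖x‖) := by gcongr
      _ = β * ‖x‖ ^ 2 := by ring
  exact le_of_mul_le_mul_right this (by positivity)

end

theorem le_rpow_half_mul_of_sq_succ_le {C : ℝ} (hC : 0 ≤ C) {u : ℕ → ℝ} (hu : ∀ m, 0 ≤ u m)
    (h : ∀ m, u (m + 1) ^ 2 ≤ C * u m ^ 2) (m : ℕ) : u m ≤ C ^ ((m : ℝ) / 2) * u 0 := by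
  have h_sq : ∀ m, u m ^ 2 ≤ C ^ m * u 0 ^ 2 := by
    intro m
    induction m with
    | zero => simp
    | succ m ih =>
      calc u (m + 1) ^ 2 ≤ C * u m ^ 2 := h m
        _ ≤ C * (C ^ m * u 0 ^ 2) := by gcongr
        _ = C ^ (m + 1) * u 0 ^ 2 := by ring
  have h_rpow : (C ^ ((m : ℝ) / 2)) ^ 2 = C ^ m := by
    rw [← Real.rpow_mul_natCast hC, ← Real.rpow_natCast]
    congr 1
    push_cast
    ring
  rw [← pow_le_pow_iff_left₀ (hu m) (by have := hu 0; positivity) two_ne_zero, mul_pow, h_rpow]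
  exact h_sq m

theorem stmt19_general {n : ℕ} (α β : ℝ) (hα : 0 < α)
    (f : EuclideanSpace ℂ (Fin n) →L[ℂ] EuclideanSpace ℂ (Fin n))
    (hlow : ∀ x : EuclideanSpace ℂ (Fin n), α * ‖x‖ ^ 2 ≤ ((inner ℂ x (f x) : ℂ)).re)
    (hup : ∀ x : EuclideanSpace ℂ (Fin n), ‖f x‖ ≤ β * ‖x‖)
    (r : ℕ → EuclideanSpace ℂ (Fin n))
    (hmin : ∀ m, ∀ s : ℂ, ‖r (m + 1)‖ ≤ ‖r m - s • f (r m)‖) :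
    (∀ x : EuclideanSpace ℂ (Fin n), x ≠ 0 →
      ∃ τ : ℂ, ‖x - τ • f x‖ ^ 2 ≤ (1 - α ^ 2 / β ^ 2) * ‖x‖ ^ 2) ∧
    ∀ m : ℕ, ‖r m‖ ≤ (1 - α ^ 2 / β ^ 2) ^ ((m : ℝ) / 2) * ‖r 0‖ := by
  have h_step (x) : ∃ τ : ℂ, ‖x - τ • f x‖ ^ 2 ≤ (1 - α ^ 2 / β ^ 2) * ‖x‖ ^ 2 :=
    exists_norm_sub_smul_sq_le hα.le (hlow x) (hup x)
  refine ⟨fun x _ ↦ h_step x, ?_⟩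
  rcases subsingleton_or_nontrivial (EuclideanSpace ℂ (Fin n)) with _ | _
  · simp [Subsingleton.elim (r _) 0]
  obtain ⟨x, hx⟩ := exists_ne (0 : EuclideanSpace ℂ (Fin n))
  have hαβ : α ≤ β := le_of_re_inner_le (𝕜 := ℂ) hx (hlow x) (hup x)
  have hC : 0 ≤ 1 - α ^ 2 / β ^ 2 :=
    sub_nonneg.2 (div_le_one_of_le₀ (pow_le_pow_left₀ hα.le hαβ 2) (sq_nonneg β))
  refine le_rpow_half_mul_of_sq_succ_le hC (fun m ↦ norm_nonneg (r m)) fun m ↦ ?_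
  obtain ⟨τ, hτ⟩ := h_step (r m)
  exact (pow_le_pow_left₀ (norm_nonneg _) (hmin m τ) 2).trans hτ

theorem stmt19 {n : ℕ} (M : Matrix (Fin n) (Fin n) ℂ) (α β : ℝ) (hα : 0 < α)
    (f : EuclideanSpace ℂ (Fin n) →L[ℂ] EuclideanSpace ℂ (Fin n))
    (hf : f = Matrix.toEuclideanCLM (𝕜 := ℂ) M)
    (hlow : ∀ x : EuclideanSpace ℂ (Fin n), α * ‖x‖ ^ 2 ≤ ((inner ℂ x (f x) : ℂ)).re)
    (hup : ∀ x : EuclideanSpace ℂ (Fin n), ‖f x‖ ≤ β * ‖x‖)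
    (r : ℕ → EuclideanSpace ℂ (Fin n)) (t : ℕ → ℂ)
    (hrec : ∀ m, r (m + 1) = r m - t m • f (r m))
    (hmin : ∀ m, ∀ s : ℂ, ‖r (m + 1)‖ ≤ ‖r m - s • f (r m)‖) :
    (∀ x : EuclideanSpace ℂ (Fin n), x ≠ 0 →
      ∃ τ : ℂ, ‖x - τ • f x‖ ^ 2 ≤ (1 - α ^ 2 / β ^ 2) * ‖x‖ ^ 2) ∧
    ∀ m : ℕ, ‖r m‖ ≤ (1 - α ^ 2 / β ^ 2) ^ ((m : ℝ) / 2) * ‖r 0‖ :=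
  stmt19_general α β hα f hlow hup r hmin
end
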